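/- arXiv:2203.03198 — 3 statements merged into one kernel-verified Lean document; each statement's English description precedes it below -/
import Mathlib

section
/- Let f, g : [A, B] → ℝ be continuous piecewise-linear functions such that every linear piece of f has slope +1 or −1 and g(x) = C − x for a constant C (slope −1 everywhere). If h(x) = g(x) − f(x) changes sign on [A,B] only where f has slope +1, then the set {x ∈ [A,B] : f(x) < g(x)} is an interval that is bounded on the left by A or on the right by B (i.e., it is of the form [A, x*) or (x*, B] or empty or all of [A,B]). -/
open Set

/-- A piecewise-linear structure on [A,B] with pieces of slope ±1: a monotone
partition t₀ = A ≤ … ≤ t_n = B with slopes s i ∈ {1, -1} such that on each piece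
f is affine with slope s i. -/
def PiecewiseSlopePM1 (f : ℝ → ℝ) (A B : ℝ) (n : ℕ) (t : Fin (n + 1) → ℝ)
    (s : Fin n → ℝ) : Prop :=
  Monotone t ∧ t 0 = A ∧ t (Fin.last n) = B ∧
  ∀ i : Fin n, (s i = 1 ∨ s i = -1) ∧
    ∀ x ∈ Icc (t i.castSucc) (t i.succ),
      f x = f (t i.castSucc) + s i * (x - t i.castSucc)

private lemma mono_glue {φ : ℝ → ℝ} {a b c : ℝ} (hbc : b ≤ c)
    (h1 : MonotoneOn φ (Icc a b)) (h2 : MonotoneOn φ (Icc b c)) :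
    MonotoneOn φ (Icc a c) := by
  intro x hx y hy hxy
  rcases le_total x b with h | h
  · rcases le_total y b with h' | h'
    · exact h1 ⟨hx.1, h⟩ ⟨hy.1, h'⟩ hxy
    · calc φ x ≤ φ b := h1 ⟨hx.1, h⟩ ⟨hx.1.trans h, le_rfl⟩ h
        _ ≤ φ y := h2 ⟨le_rfl, hbc⟩ ⟨h', hy.2⟩ h'
  · exact h2 ⟨h, hx.2⟩ ⟨h.trans hxy, hy.2⟩ hxy

/-- let f be continuous piecewise linear on [A,B] with all slopes
±1 and g(x) = C − x (slope −1 everywhere). If h = g − f changes sign only on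
pieces where f has slope +1 (i.e. on slope −1 pieces g − f has constant sign),
then {x ∈ [A,B] : f(x) < g(x)} is an interval anchored at an endpoint:
of the form [A, x*) or (x*, B], or empty, or all of [A,B]. -/
theorem sublevel_interval_anchored (f g : ℝ → ℝ) (A B C : ℝ) (hAB : A ≤ B)
    (hf : ContinuousOn f (Icc A B))
    (n : ℕ) (t : Fin (n + 1) → ℝ) (s : Fin n → ℝ)
    (hpl : PiecewiseSlopePM1 f A B n t s)
    (hg : ∀ x ∈ Icc A B, g x = C - x)
    (hsign : ∀ i : Fin n, s i = -1 →
      ∀ x ∈ Icc (t i.castSucc) (t i.succ), ∀ y ∈ Icc (t i.castSucc) (t i.succ),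
        (g x - f x) * (g y - f y) ≥ 0) :
    (∃ c, {x ∈ Icc A B | f x < g x} = Ico A c ∨
          {x ∈ Icc A B | f x < g x} = Ioc c B) ∨
    {x ∈ Icc A B | f x < g x} = ∅ ∨
    {x ∈ Icc A B | f x < g x} = Icc A B := by
  obtain ⟨ht, ht0, htl, hpc⟩ := hpl
  set φ : ℝ → ℝ := fun x => f x + x with hφ
  have hφc : ContinuousOn φ (Icc A B) := hf.add continuousOn_id
  -- φ is monotone on [A,B]
  have hmono : MonotoneOn φ (Icc A B) := by
    have key : ∀ k (hk : k ≤ n),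
        MonotoneOn φ (Icc A (t ⟨k, Nat.lt_succ_of_le hk⟩)) := by
      intro k
      induction k with
      | zero =>
        intro _
        have : (⟨0, Nat.lt_succ_of_le (Nat.zero_le n)⟩ : Fin (n+1)) = 0 := rfl
        rw [this, ht0]
        intro x hx y hy _
        have hx' : x = A := le_antisymm hx.2 hx.1
        have hy' : y = A := le_antisymm hy.2 hy.1
        rw [hx', hy']
      | succ k ih =>
        intro hk
        have hk' : k ≤ n := Nat.le_of_succ_le hk
        have hkn : k < n := hk
        set i : Fin n := ⟨k, hkn⟩ with hi
        have e1 : i.castSucc = (⟨k, Nat.lt_succ_of_le hk'⟩ : Fin (n+1)) := rfl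
        have e2 : i.succ = (⟨k+1, Nat.lt_succ_of_le hk⟩ : Fin (n+1)) := rfl
        have piece : MonotoneOn φ (Icc (t i.castSucc) (t i.succ)) := by
          intro x hx y hy hxy
          obtain ⟨hs, hval⟩ := hpc i
          have hvx := hval x hx
          have hvy := hval y hy
          simp only [hφ]
          rw [hvx, hvy]
          rcases hs with h | h <;> rw [h] <;> linarith
        have hab : A ≤ t i.castSucc := by
          rw [← ht0]; exact ht (Fin.zero_le _)
        have hbc : t i.castSucc ≤ t i.succ := ht (Fin.castSucc_le_succ i)
        have goal : MonotoneOn φ (Icc A (t i.succ)) := mono_glue hbc (ih hk') piece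
        exact goal
    have h := key n le_rfl
    have : (⟨n, Nat.lt_succ_of_le le_rfl⟩ : Fin (n+1)) = Fin.last n := rfl
    rw [this, htl] at h
    exact h
  have hmemS : ∀ x ∈ Icc A B, (f x < g x ↔ φ x < C) := by
    intro x hx
    rw [hg x hx]
    simp only [hφ]
    constructor <;> intro <;> linarith
  by_cases hB : f B < g B
  · -- the whole interval
    right; right
    ext x
    simp only [mem_setOf_eq]
    constructor
    · rintro ⟨hx, _⟩; exact hx
    · intro hx
      refine ⟨hx, ?_⟩
      have hBI : B ∈ Icc A B := ⟨hAB, le_rfl⟩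
      have h1 : φ x ≤ φ B := hmono hx hBI hx.2
      have h2 : φ B < C := (hmemS B hBI).1 hB
      exact (hmemS x hx).2 (lt_of_le_of_lt h1 h2)
  · by_cases hA : f A < g A
    · -- Ico A c with c = sSup S
      set S := {x ∈ Icc A B | f x < g x} with hS
      have hAI : A ∈ Icc A B := ⟨le_rfl, hAB⟩
      have hSne : S.Nonempty := ⟨A, hAI, hA⟩
      have hSbdd : BddAbove S := ⟨B, fun x hx => hx.1.2⟩
      left
      refine ⟨sSup S, Or.inl ?_⟩
      ext x
      constructor
      · rintro ⟨hx, hfx⟩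
        refine ⟨hx.1, ?_⟩
        have hφx : φ x < C := (hmemS x hx).1 hfx
        have hxB : x < B := lt_of_le_of_ne hx.2 (by rintro rfl; exact hB hfx)
        have hc : ContinuousWithinAt φ (Icc A B) x := hφc x hx
        obtain ⟨δ, hδ, hδ'⟩ :=
          (Metric.continuousWithinAt_iff.1 hc) (C - φ x) (by linarith)
        set y := min B (x + δ/2) with hy
        have hxy : x < y := lt_min hxB (by linarith)
        have hyI : y ∈ Icc A B := ⟨le_min (hx.1.trans hx.2) (by linarith [hx.1]),
          min_le_left _ _⟩
        have hdist : dist y x < δ := by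
          rw [Real.dist_eq, abs_of_pos (by linarith : (0:ℝ) < y - x)]
          have : y ≤ x + δ/2 := min_le_right _ _
          linarith
        have hbound := hδ' hyI hdist
        rw [Real.dist_eq] at hbound
        have hφy : φ y < C := by
          have := (abs_sub_lt_iff.1 hbound).1
          linarith
        have hyS : y ∈ S := ⟨hyI, (hmemS y hyI).2 hφy⟩
        exact lt_of_lt_of_le hxy (le_csSup hSbdd hyS)
      · rintro ⟨hxA, hxlt⟩
        obtain ⟨y, hyS, hxy⟩ := exists_lt_of_lt_csSup hSne hxlt
        have hxI : x ∈ Icc A B := ⟨hxA, hxy.le.trans hyS.1.2⟩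
        refine ⟨hxI, ?_⟩
        have h1 : φ x ≤ φ y := hmono hxI hyS.1 hxy.le
        have h2 : φ y < C := (hmemS y hyS.1).1 hyS.2
        exact (hmemS x hxI).2 (lt_of_le_of_lt h1 h2)
    · -- empty
      right; left
      ext x
      simp only [mem_setOf_eq, mem_empty_iff_false, iff_false, not_and]
      intro hx hfx
      have hAI : A ∈ Icc A B := ⟨le_rfl, hAB⟩
      have h1 : φ A ≤ φ x := hmono hAI hx hx.1
      have h2 : φ x < C := (hmemS x hx).1 hfx
      exact hA ((hmemS A hAI).2 (lt_of_le_of_lt h1 h2))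
end

section
/- Let R be a closed axis-aligned rectangle that is an obstacle, with top-left corner α and top-right corner β, inside free space F (complement of disjoint open rectangles). For any point p on the open top side of R and any point s ∈ F with y(s) < y(p) not lying on the top side of R, every geodesic L1 path in F from p to s that initially moves downward must leave the top side through α or β; formally, every path in F from p to s that is y-monotone (y nonincreasing from p) contains α or β. -/
open Set

/-- let R = [a,b] × [c,d] be a rectangular obstacle whose interior
is disjoint from the free space F, with top-left corner α = (a,d) and top-right
corner β = (b,d). For any point p on the open top side of R and any s ∈ F with
y(s) < d not on the top side, every continuous path in F from p to s whose
y-coordinate is nonincreasing passes through α or β. -/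
theorem geodesic_through_top_corner (a b c d : ℝ) (hab : a < b) (hcd : c < d)
    (F : Set (ℝ × ℝ)) (hFR : F ∩ (Ioo a b ×ˢ Ioo c d) = ∅)
    (p s : ℝ × ℝ) (hp : p.2 = d) (hpa : a < p.1) (hpb : p.1 < b)
    (hs : s ∈ F) (hsy : s.2 < d)
    (γ : ℝ → ℝ × ℝ) (hγc : ContinuousOn γ (Icc 0 1))
    (hγF : ∀ t ∈ Icc (0 : ℝ) 1, γ t ∈ F)
    (hγ0 : γ 0 = p) (hγ1 : γ 1 = s)
    (hγy : AntitoneOn (fun t => (γ t).2) (Icc 0 1)) :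
    ∃ t ∈ Icc (0 : ℝ) 1, γ t = (a, d) ∨ γ t = (b, d) := by
  by_contra hcon
  push_neg at hcon
  have h01 : (0:ℝ) ∈ Icc (0:ℝ) 1 := ⟨le_rfl, zero_le_one⟩
  have h11 : (1:ℝ) ∈ Icc (0:ℝ) 1 := ⟨zero_le_one, le_rfl⟩
  set T : Set ℝ := Icc (0:ℝ) 1 ∩ (fun t => (γ t).2) ⁻¹' {d} with hT
  have h0T : (0:ℝ) ∈ T := ⟨h01, by simp [hγ0, hp]⟩
  have hTne : T.Nonempty := ⟨0, h0T⟩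
  have hTbdd : BddAbove T := ⟨1, fun t ht => ht.1.2⟩
  have hTclosed : IsClosed T :=
    (hγc.snd).preimage_isClosed_of_isClosed isClosed_Icc isClosed_singleton
  set u : ℝ := sSup T with hu
  have huT : u ∈ T := hTclosed.csSup_mem hTne hTbdd
  have hu01 : u ∈ Icc (0:ℝ) 1 := huT.1
  have huy : (γ u).2 = d := huT.2
  -- y ≤ d everywhere, and y = d on [0,u]
  have hyled : ∀ t ∈ Icc (0:ℝ) 1, (γ t).2 ≤ d := by
    intro t ht
    have := hγy h01 ht ht.1
    simpa [hγ0, hp] using this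
  have hyd : ∀ t ∈ Icc (0:ℝ) u, (γ t).2 = d := by
    intro t ht
    have ht1 : t ∈ Icc (0:ℝ) 1 := ⟨ht.1, ht.2.trans hu01.2⟩
    have h1 : d ≤ (γ t).2 := by
      have := hγy ht1 hu01 ht.2
      simpa [huy] using this
    exact le_antisymm (hyled t ht1) h1
  -- x stays in (a,b) on [0,u]
  have hxab : ∀ t ∈ Icc (0:ℝ) u, a < (γ t).1 ∧ (γ t).1 < b := by
    intro t ht
    have ht1 : t ∈ Icc (0:ℝ) 1 := ⟨ht.1, ht.2.trans hu01.2⟩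
    by_contra hx
    push_neg at hx
    -- exists t' ∈ [0,t] with x = a or x = b
    have hxc : ContinuousOn (fun r => (γ r).1) (Icc 0 t) :=
      (hγc.fst).mono (Icc_subset_Icc le_rfl ht1.2)
    have hx0 : (γ 0).1 = p.1 := by rw [hγ0]
    have key : ∃ t' ∈ Icc (0:ℝ) t, (γ t').1 = a ∨ (γ t').1 = b := by
      by_cases hle : (γ t).1 ≤ a
      · have : a ∈ (fun r => (γ r).1) '' Icc 0 t := by
          apply intermediate_value_Icc' ht1.1 hxc
          constructor
          · exact hle
          · rw [hx0]; exact hpa.le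
        obtain ⟨t', ht', hxt'⟩ := this
        exact ⟨t', ht', Or.inl hxt'⟩
      · push_neg at hle
        have hge : b ≤ (γ t).1 := by
          rcases lt_or_ge (γ t).1 b with h | h
          · exact absurd (hx hle) (not_le.mpr h)
          · exact h
        have : b ∈ (fun r => (γ r).1) '' Icc 0 t := by
          apply intermediate_value_Icc ht1.1 hxc
          constructor
          · rw [hx0]; exact hpb.le
          · exact hge
        obtain ⟨t', ht', hxt'⟩ := this
        exact ⟨t', ht', Or.inr hxt'⟩
    obtain ⟨t', ht', hxt'⟩ := key
    have ht'u : t' ∈ Icc (0:ℝ) u := ⟨ht'.1, ht'.2.trans ht.2⟩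
    have ht'1 : t' ∈ Icc (0:ℝ) 1 := ⟨ht'.1, ht'u.2.trans hu01.2⟩
    have hyt' : (γ t').2 = d := hyd t' ht'u
    rcases hxt' with hxa | hxb
    · exact (hcon t' ht'1).1 (Prod.ext hxa hyt')
    · exact (hcon t' ht'1).2 (Prod.ext hxb hyt')
  -- u < 1
  have hune : u < 1 := by
    rcases lt_or_eq_of_le hu01.2 with h | h
    · exact h
    · exfalso
      have := hyd 1 ⟨zero_le_one, h.ge⟩
      rw [hγ1] at this
      exact absurd this hsy.ne
  -- continuity at u: find t > u with γ t ∈ Ioo a b ×ˢ Ioo c (d+1)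
  have hγu : γ u ∈ Ioo a b ×ˢ Ioo c (d + 1) := by
    obtain ⟨hxa, hxb⟩ := hxab u ⟨hu01.1, le_rfl⟩
    exact ⟨⟨hxa, hxb⟩, by rw [huy]; exact ⟨hcd, by linarith⟩⟩
  have hopen : IsOpen (Ioo a b ×ˢ Ioo c (d + 1)) := isOpen_Ioo.prod isOpen_Ioo
  have hcwa : ContinuousWithinAt γ (Icc 0 1) u := hγc u hu01
  have hev : ∀ᶠ t in nhdsWithin u (Icc 0 1), γ t ∈ Ioo a b ×ˢ Ioo c (d + 1) :=
    hcwa (hopen.mem_nhds hγu)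
  have hsub : Ioc u 1 ⊆ Icc (0:ℝ) 1 := fun t ht => ⟨hu01.1.trans ht.1.le, ht.2⟩
  have hev2 : ∀ᶠ t in nhdsWithin u (Ioc u 1), γ t ∈ Ioo a b ×ˢ Ioo c (d + 1) :=
    hev.filter_mono (nhdsWithin_mono u hsub)
  have hne : (nhdsWithin u (Ioc u 1)).NeBot := by
    apply IsGLB.nhdsWithin_neBot
    · exact isGLB_Ioc hune
    · exact nonempty_Ioc.mpr hune
  obtain ⟨t, htU, htI⟩ := (hev2.and (eventually_mem_nhdsWithin)).exists
  have ht1 : t ∈ Icc (0:ℝ) 1 := hsub htI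
  have hyt : (γ t).2 < d := by
    rcases lt_or_eq_of_le (hyled t ht1) with h | h
    · exact h
    · exfalso
      have htT : t ∈ T := ⟨ht1, h⟩
      exact absurd (le_csSup hTbdd htT) (not_le.mpr htI.1)
  have : γ t ∈ F ∩ (Ioo a b ×ˢ Ioo c d) :=
    ⟨hγF t ht1, ⟨htU.1, htU.2.1, hyt⟩⟩
  rw [hFR] at this
  exact this
end

section
/- Let C = x(β) − x(α) ≥ 0 and for each i ∈ {1,…,m} let d_α(i), d_β(i) ≥ 0 with d_α(i) ≤ d_β(i) ≤ d_α(i) + C, and define D(t) = max_i min(d_α(i) + t, d_β(i) − t) for t ∈ [0, C]. Then D is a continuous piecewise-linear function with all slopes in {+1, −1}, and the number of maximal pieces where the maximizing index and active branch (α or β) are constant is at most 2m. -/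
open Set

/-- let C = x(β) − x(α) ≥ 0 and for each site i let
0 ≤ d_α(i) ≤ d_β(i) ≤ d_α(i) + C. The upper envelope
D(t) = max_i min(d_α(i) + t, d_β(i) − t) on [0, C] is continuous and piecewise
linear with slopes ±1: there is a partition of [0, C] into at most 2m pieces on
each of which D is given by a single site through a single branch (α-branch of
slope +1 or β-branch of slope −1). -/
theorem envelope_structure (m : ℕ) (hm : 0 < m) (C : ℝ) (hC : 0 ≤ C)
    (dα dβ : Fin m → ℝ) (h0 : ∀ i, 0 ≤ dα i) (h1 : ∀ i, dα i ≤ dβ i)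
    (h2 : ∀ i, dβ i ≤ dα i + C)
    (D : ℝ → ℝ) (hD : ∀ t, D t = ⨆ i, min (dα i + t) (dβ i - t)) :
    ContinuousOn D (Icc 0 C) ∧
    ∃ k, k ≤ 2 * m ∧ ∃ t : Fin (k + 1) → ℝ, Monotone t ∧ t 0 = 0 ∧
      t (Fin.last k) = C ∧
      ∀ j : Fin k, ∃ i : Fin m,
        (∀ x ∈ Icc (t j.castSucc) (t j.succ), D x = dα i + x) ∨
        (∀ x ∈ Icc (t j.castSucc) (t j.succ), D x = dβ i - x) := by
  classical
  have hne : Nonempty (Fin m) := ⟨⟨0, hm⟩⟩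
  have hattain : ∀ t : ℝ, ∃ i, D t = min (dα i + t) (dβ i - t) := by
    intro t
    have h' : ∃ i, min (dα i + t) (dβ i - t) = ⨆ i, min (dα i + t) (dβ i - t) :=
      exists_eq_ciSup_of_finite
    obtain ⟨i, hi⟩ := h'
    exact ⟨i, by rw [hD t, ← hi]⟩
  have hle : ∀ (t : ℝ) (i : Fin m), min (dα i + t) (dβ i - t) ≤ D t := by
    intro t i
    rw [hD t]
    have hb : BddAbove (Set.range (fun i : Fin m => min (dα i + t) (dβ i - t))) :=
      Set.Finite.bddAbove (Set.finite_range _)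
    exact le_ciSup hb i
  have hf : ∀ {x y : ℝ}, x ≤ y → D y - y ≤ D x - x := by
    intro x y hxy
    obtain ⟨i, hi⟩ := hattain y
    have h1' := hle x i
    have hkey : min (dα i + y) (dβ i - y) - y ≤ min (dα i + x) (dβ i - x) - x := by
      rcases min_cases (dα i + y) (dβ i - y) with ⟨e1, e2⟩ | ⟨e1, e2⟩ <;>
        rcases min_cases (dα i + x) (dβ i - x) with ⟨e3, e4⟩ | ⟨e3, e4⟩ <;>
        rw [e1, e3] <;> linarith
    linarith
  have hG : ∀ {x y : ℝ}, x ≤ y → D x + x ≤ D y + y := by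
    intro x y hxy
    obtain ⟨i, hi⟩ := hattain x
    have h1' := hle y i
    have hkey : min (dα i + x) (dβ i - x) + x ≤ min (dα i + y) (dβ i - y) + y := by
      rcases min_cases (dα i + x) (dβ i - x) with ⟨e1, e2⟩ | ⟨e1, e2⟩ <;>
        rcases min_cases (dα i + y) (dβ i - y) with ⟨e3, e4⟩ | ⟨e3, e4⟩ <;>
        rw [e1, e3] <;> linarith
    linarith
  have hcont : Continuous D := by
    have hlip : LipschitzWith 1 D := by
      apply LipschitzWith.of_dist_le_mul
      intro x y
      rw [Real.dist_eq, Real.dist_eq, NNReal.coe_one, one_mul]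
      rcases le_total x y with h | h
      · have h1' := hf h; have h2' := hG h
        rw [abs_of_nonpos (by linarith : x - y ≤ 0), abs_le]
        constructor <;> linarith
      · have h1' := hf h; have h2' := hG h
        rw [abs_of_nonneg (by linarith : (0:ℝ) ≤ x - y), abs_le]
        constructor <;> linarith
    exact hlip.continuous
  refine ⟨hcont.continuousOn, ?_⟩
  set J : Fin m × Bool → Set ℝ := fun σ =>
    Icc 0 C ∩ {x | D x = cond σ.2 (dα σ.1 + x) (dβ σ.1 - x)} with hJdef
  have hJ3 : ∀ (σ) (a b x : ℝ), a ∈ J σ → b ∈ J σ → a ≤ x → x ≤ b → x ∈ J σ := by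
    rintro ⟨i, b⟩ a c x ⟨haI, ha⟩ ⟨hcI, hc⟩ hax hxc
    refine ⟨⟨le_trans haI.1 hax, le_trans hxc hcI.2⟩, ?_⟩
    cases b
    · replace ha : D a = dβ i - a := ha
      replace hc : D c = dβ i - c := hc
      show D x = dβ i - x
      have q1 := hG hax; have q2 := hG hxc; linarith
    · replace ha : D a = dα i + a := ha
      replace hc : D c = dα i + c := hc
      show D x = dα i + x
      have q1 := hf hax; have q2 := hf hxc; linarith
  have hJc : ∀ σ, IsClosed (J σ) := by
    rintro ⟨i, b⟩
    apply IsClosed.inter isClosed_Icc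
    cases b
    · show IsClosed {x : ℝ | D x = dβ i - x}
      exact isClosed_eq hcont (continuous_const.sub continuous_id)
    · show IsClosed {x : ℝ | D x = dα i + x}
      exact isClosed_eq hcont (continuous_const.add continuous_id)
  have hJsub : ∀ σ, J σ ⊆ Icc (0:ℝ) C := fun σ => inter_subset_left
  have hcov : ∀ x ∈ Icc (0:ℝ) C, ∃ σ, x ∈ J σ := by
    intro x hx
    obtain ⟨i, hi⟩ := hattain x
    rcases min_choice (dα i + x) (dβ i - x) with h | h
    · refine ⟨(i, true), hx, ?_⟩
      show D x = dα i + x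
      rw [hi, h]
    · refine ⟨(i, false), hx, ?_⟩
      show D x = dβ i - x
      rw [hi, h]
  set r : Fin m × Bool → ℝ := fun σ => sSup (J σ) with hrdef
  set l : Fin m × Bool → ℝ := fun σ => sInf (J σ) with hldef
  have hbddA : ∀ σ, BddAbove (J σ) := fun σ => bddAbove_Icc.mono (hJsub σ)
  have hbddB : ∀ σ, BddBelow (J σ) := fun σ => bddBelow_Icc.mono (hJsub σ)
  have hrmem : ∀ σ, (J σ).Nonempty → r σ ∈ J σ := fun σ h => (hJc σ).csSup_mem h (hbddA σ)
  have hlmem : ∀ σ, (J σ).Nonempty → l σ ∈ J σ := fun σ h => (hJc σ).csInf_mem h (hbddB σ)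
  have hler : ∀ σ x, x ∈ J σ → x ≤ r σ := fun σ x hx => le_csSup (hbddA σ) hx
  have hlel : ∀ σ x, x ∈ J σ → l σ ≤ x := fun σ x hx => csInf_le (hbddB σ) hx
  set S : Finset ℝ := insert 0 (Finset.image r Finset.univ) with hSdef
  have hS0 : (0:ℝ) ∈ S := Finset.mem_insert_self _ _
  have hSIcc : ∀ y ∈ S, y ∈ Icc (0:ℝ) C := by
    intro y hy
    rcases Finset.mem_insert.1 hy with h | h
    · subst h; exact ⟨le_refl 0, hC⟩
    · obtain ⟨σ, -, rfl⟩ := Finset.mem_image.1 h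
      by_cases hne' : (J σ).Nonempty
      · exact hJsub σ (hrmem σ hne')
      · have hemp : J σ = ∅ := not_nonempty_iff_eq_empty.1 hne'
        have : r σ = 0 := by rw [hrdef]; simp [hemp, Real.sSup_empty]
        rw [this]; exact ⟨le_refl 0, hC⟩
  have hSC : C ∈ S := by
    obtain ⟨σ, hσ⟩ := hcov C ⟨hC, le_refl C⟩
    have h1' : C ≤ r σ := hler σ C hσ
    have h2' : r σ ≤ C := (hJsub σ (hrmem σ ⟨C, hσ⟩)).2
    have hrc : r σ = C := le_antisymm h2' h1'
    rw [← hrc]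
    exact Finset.mem_insert_of_mem (Finset.mem_image_of_mem r (Finset.mem_univ σ))
  set k := S.card - 1 with hkdef
  have hpos : 0 < S.card := Finset.card_pos.2 ⟨0, hS0⟩
  have hcard : S.card = k + 1 := by omega
  have hk : k ≤ 2 * m := by
    have h1' : S.card ≤ (Finset.image r Finset.univ).card + 1 := Finset.card_insert_le _ _
    have h2' : (Finset.image r Finset.univ).card ≤ Fintype.card (Fin m × Bool) :=
      le_trans Finset.card_image_le (by simp [Finset.card_univ])
    have h3' : Fintype.card (Fin m × Bool) = 2 * m := by simp; ring
    omega
  set iso := S.orderIsoOfFin hcard with hisodef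
  set t : Fin (k+1) → ℝ := fun j => (iso j : ℝ) with htdef
  have hmono : Monotone t := fun a b hab => Subtype.coe_le_coe.2 (iso.monotone hab)
  have hmem : ∀ j, t j ∈ S := fun j => (iso j).2
  have hsurj : ∀ y ∈ S, ∃ j, t j = y := fun y hy =>
    ⟨iso.symm ⟨y, hy⟩, by simp [htdef]⟩
  have ht0 : t 0 = 0 := by
    obtain ⟨j, hj⟩ := hsurj 0 hS0
    have h1' : t 0 ≤ t j := hmono (Fin.zero_le j)
    have h2' : 0 ≤ t 0 := (hSIcc _ (hmem 0)).1
    rw [hj] at h1'; linarith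
  have htl : t (Fin.last k) = C := by
    obtain ⟨j, hj⟩ := hsurj C hSC
    have h1' : t j ≤ t (Fin.last k) := hmono (Fin.le_last j)
    have h2' : t (Fin.last k) ≤ C := (hSIcc _ (hmem _)).2
    rw [hj] at h1'; linarith
  have hgap : ∀ (j : Fin k) (y : ℝ), y ∈ S → t j.castSucc < y → t j.succ ≤ y := by
    intro j y hy hlt
    obtain ⟨j', rfl⟩ := hsurj y hy
    have hj' : j.castSucc < j' := by
      by_contra hcon
      push_neg at hcon
      exact absurd (hmono hcon) (not_le.2 hlt)
    exact hmono (Fin.castSucc_lt_iff_succ_le.mp hj')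
  have hstrict : ∀ j : Fin k, t j.castSucc < t j.succ := fun j =>
    Subtype.coe_lt_coe.2 (iso.strictMono (Fin.castSucc_lt_succ : j.castSucc < j.succ))
  refine ⟨k, hk, t, hmono, ht0, htl, ?_⟩
  intro j
  set s := t j.castSucc with hsdef
  set u := t j.succ with hudef
  have hsu : s < u := hstrict j
  have hsIcc := hSIcc _ (hmem j.castSucc)
  have huIcc := hSIcc _ (hmem j.succ)
  have key : ∃ σ, (J σ ∩ Ioo s u).Nonempty ∧ l σ ≤ s := by
    by_contra hcon
    push_neg at hcon
    have hQ : ∀ x : ℝ, x ∈ Ioo s u → ∃ σ, x ∈ J σ ∧ s < l σ ∧ l σ ≤ x := by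
      intro x hx
      obtain ⟨σ, hσ⟩ := hcov x ⟨le_trans hsIcc.1 hx.1.le, le_trans hx.2.le huIcc.2⟩
      exact ⟨σ, hσ, hcon σ ⟨x, hσ, hx⟩, hlel σ x hσ⟩
    set Q : Finset (Fin m × Bool) :=
      Finset.univ.filter (fun σ => (J σ ∩ Ioo s u).Nonempty) with hQdef
    have hQne : Q.Nonempty := by
      obtain ⟨σ, hσ, -, -⟩ := hQ ((s+u)/2) ⟨by linarith, by linarith⟩
      exact ⟨σ, Finset.mem_filter.2 ⟨Finset.mem_univ _,
        ⟨(s+u)/2, hσ, ⟨by linarith, by linarith⟩⟩⟩⟩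
    obtain ⟨σm, hσm, hminle⟩ := Q.exists_min_image l hQne
    have hεs : s < l σm := hcon σm (Finset.mem_filter.1 hσm).2
    have hminsu : s < min (l σm) u := lt_min hεs hsu
    set x := (s + min (l σm) u)/2 with hxdef
    have hx1 : s < x := by rw [hxdef]; linarith
    have hx2 : x < min (l σm) u := by rw [hxdef]; linarith
    have hxu : x < u := lt_of_lt_of_le hx2 (min_le_right _ _)
    have hxε : x < l σm := lt_of_lt_of_le hx2 (min_le_left _ _)
    obtain ⟨σ1, hσ1J, -, hσ1le⟩ := hQ x ⟨hx1, hxu⟩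
    have hσ1Q : σ1 ∈ Q := Finset.mem_filter.2 ⟨Finset.mem_univ _, ⟨x, hσ1J, hx1, hxu⟩⟩
    have := hminle σ1 hσ1Q
    linarith
  obtain ⟨σ, ⟨w, hwJ, hwIoo⟩, hlσ⟩ := key
  have hJne : (J σ).Nonempty := ⟨w, hwJ⟩
  have hsJ : s ∈ J σ := hJ3 σ (l σ) w s (hlmem σ hJne) hwJ hlσ hwIoo.1.le
  have hrS : r σ ∈ S := Finset.mem_insert_of_mem (Finset.mem_image_of_mem r (Finset.mem_univ σ))
  have hru : u ≤ r σ := hgap j (r σ) hrS (lt_of_lt_of_le hwIoo.1 (hler σ w hwJ))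
  have hall : ∀ x ∈ Icc s u, x ∈ J σ := fun x hx =>
    hJ3 σ s (r σ) x hsJ (hrmem σ hJne) hx.1 (le_trans hx.2 hru)
  obtain ⟨i, b⟩ := σ
  refine ⟨i, ?_⟩
  cases b
  · right; intro x hx
    exact (hall x hx).2
  · left; intro x hx
    exact (hall x hx).2
end
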